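/- In the global construction for a formula with m clauses over n variables, fix j ∈ {1,…,m} and r ∈ {1,2,3}, and let i = v(j,r). Among the 3m + 2n levee functions L_{j',r'}(x₁,x₂) = f_{s_{r'}^{(j')}}(x₁, x₂ − j'Δ) for j' ∈ {1,…,m}, r' ∈ {1,2,3}, and M_{i',σ}(x₁,x₂) = f_σ(x₁, x₂ + i'Δ) for i' ∈ {1,…,n}, σ ∈ {−1,1}, exactly two are nonzero at the point p_{j,r}, namely L_{j,r} and M_{i,1}; moreover both of these take the value 1 at p_{j,r}. -/

import Mathlib

/-!
Write `X` for the first coordinate of `p_{j,r}` and `s = s_r^{(j)} ∈ [-1, 0]`. By construction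
`X (1 - s) = Δ (i + j)`, so `p_{j,r}` lies on the centre line of `L_{j,r}` and, since its second
coordinate is `X - Δ i`, also on that of `M_{i,1}`. At `p_{j,r}` the offset of `L_{j',r'}` from its
centre line is `Δ (j - j') + X (s - s')`, with `s - s' = (2 (j - j') + (r - r')) δ`: for `j' ≠ j` the
two terms have the same sign and the first is at least `Δ`, while for `j' = j` the second is at
least `X δ ≥ Δ / (4m) > 4`. The offset of `M_{i',1}` is `Δ (i' - i)`, and that of `M_{i',-1}` is
`2X + Δ (i' - i) ≥ Δ (i' + j)`. In every case the offset is at least `2` in absolute value.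
-/

/-- The levee with slope `s`, as a piecewise definition. -/
noncomputable def levee (s x₁ x₂ : ℝ) : ℝ :=
  if 2 ≤ |x₂ - s * x₁| then 0
  else if |x₂ - s * x₁| ≤ 1 then 1
  else if x₂ - s * x₁ < -1 then 2 + x₂ - s * x₁
  else 2 - x₂ + s * x₁

/-- The slope `s_r^{(j)} = (2j − 3 + r)·δ − 1` with `δ = 1/(2m)` of the global construction. -/
noncomputable def slopeG (m j r : ℕ) : ℝ :=
  (2 * (j : ℝ) - 3 + (r : ℝ)) * (1 / (2 * (m : ℝ))) - 1

/-- The offset distance `Δ = 16m + 6` of the global construction. -/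
noncomputable def DeltaG (m : ℕ) : ℝ := 16 * (m : ℝ) + 6

/-- The point `p_{j,r}` of the global construction, where `i = v(j,r)`. -/
noncomputable def pPoint (m i j r : ℕ) : ℝ × ℝ :=
  (DeltaG m * ((i : ℝ) + (j : ℝ)) / (1 - slopeG m j r),
   DeltaG m * ((i : ℝ) + (j : ℝ)) / (1 - slopeG m j r) - DeltaG m * (i : ℝ))

lemma levee_eq_one_of_abs_le {s x₁ x₂ : ℝ} (h : |x₂ - s * x₁| ≤ 1) : levee s x₁ x₂ = 1 := by
  rw [levee, if_neg (by linarith), if_pos h]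

lemma levee_eq_zero_of_two_le_abs {s x₁ x₂ : ℝ} (h : 2 ≤ |x₂ - s * x₁|) : levee s x₁ x₂ = 0 :=
  if_pos h

lemma two_le_abs_mul_add_mul_of_ne_zero {D c : ℝ} {a b : ℤ} (hD : 2 ≤ D) (hc : 2 ≤ c)
    (hb : |b| ≤ 2) (hab : a ≠ 0 ∨ b ≠ 0) : 2 ≤ |D * a + c * (2 * a + b)| := by
  obtain ⟨hb₁, hb₂⟩ := abs_le.mp hb
  rcases lt_trichotomy a 0 with ha | rfl | ha
  · have ha' : (a : ℝ) ≤ -1 := by exact_mod_cast Int.le_sub_one_of_lt ha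
    have hab' : (2 * a + b : ℝ) ≤ 0 := by exact_mod_cast (by omega : 2 * a + b ≤ 0)
    rw [le_abs]
    right
    nlinarith
  · have hb0 : 1 ≤ |(b : ℝ)| := by
      exact_mod_cast Int.one_le_abs (hab.resolve_left (not_not.mpr rfl))
    rw [Int.cast_zero, mul_zero, mul_zero, zero_add, zero_add, abs_mul, abs_of_nonneg (by linarith)]
    nlinarith
  · have ha' : (1 : ℝ) ≤ a := by exact_mod_cast ha
    have hab' : (0 : ℝ) ≤ 2 * a + b := by exact_mod_cast (by omega : 0 ≤ 2 * a + b)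
    rw [le_abs]
    left
    nlinarith

lemma two_le_DeltaG (m : ℕ) : 2 ≤ DeltaG m := by
  unfold DeltaG
  have : (0 : ℝ) ≤ m := m.cast_nonneg
  linarith

lemma slopeG_sub_slopeG (m j r j' r' : ℕ) :
    slopeG m j r - slopeG m j' r' = (2 * ((j : ℝ) - j') + ((r : ℝ) - r')) / (2 * m) := by
  unfold slopeG
  ring

lemma slopeG_mem_Icc {m j r : ℕ} (hj₁ : 1 ≤ j) (hj₂ : j ≤ m) (hr₁ : 1 ≤ r) (hr₂ : r ≤ 3) :
    slopeG m j r ∈ Set.Icc (-1) 0 := by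
  have hm : (0 : ℝ) < 2 * m := by
    have : (1 : ℝ) ≤ m := by exact_mod_cast hj₁.trans hj₂
    linarith
  have hj : (1 : ℝ) ≤ j ∧ (j : ℝ) ≤ m := ⟨by exact_mod_cast hj₁, by exact_mod_cast hj₂⟩
  have hr : (1 : ℝ) ≤ r ∧ (r : ℝ) ≤ 3 := ⟨by exact_mod_cast hr₁, by exact_mod_cast hr₂⟩
  unfold slopeG
  rw [mul_one_div]
  constructor
  · have : 0 ≤ (2 * (j : ℝ) - 3 + r) / (2 * m) := div_nonneg (by linarith) hm.le
    linarith
  · have : (2 * (j : ℝ) - 3 + r) / (2 * m) ≤ 1 := (div_le_one hm).mpr (by linarith)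
    linarith

section pPoint

variable {m i j r : ℕ}

lemma pPoint_fst_mul_one_sub_slopeG (hs : slopeG m j r ≠ 1) :
    (pPoint m i j r).1 * (1 - slopeG m j r) = DeltaG m * (i + j) :=
  div_mul_cancel₀ _ (sub_ne_zero.mpr hs.symm)

lemma le_pPoint_fst (hs₁ : -1 ≤ slopeG m j r) (hs₂ : slopeG m j r < 1) :
    DeltaG m * (i + j) / 2 ≤ (pPoint m i j r).1 := by
  have hD := two_le_DeltaG m
  exact div_le_div_of_nonneg_left (by positivity) (by linarith) (by linarith)

lemma levee_slopeG_pPoint_self (hs : slopeG m j r ≠ 1) :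
    levee (slopeG m j r) (pPoint m i j r).1 ((pPoint m i j r).2 - j * DeltaG m) = 1 := by
  apply levee_eq_one_of_abs_le
  have hX := pPoint_fst_mul_one_sub_slopeG (i := i) hs
  have : (pPoint m i j r).2 - j * DeltaG m - slopeG m j r * (pPoint m i j r).1 = 0 := by
    simp only [pPoint] at hX ⊢
    linear_combination hX
  rw [this, abs_zero]
  exact zero_le_one

lemma levee_one_pPoint_self :
    levee 1 (pPoint m i j r).1 ((pPoint m i j r).2 + i * DeltaG m) = 1 := by
  apply levee_eq_one_of_abs_le
  have : (pPoint m i j r).2 + i * DeltaG m - 1 * (pPoint m i j r).1 = 0 := by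
    simp only [pPoint]
    ring
  rw [this, abs_zero]
  exact zero_le_one

lemma levee_slopeG_pPoint_of_ne {j' r' : ℕ} (hj₁ : 1 ≤ j) (hj₂ : j ≤ m) (hr₁ : 1 ≤ r)
    (hr₂ : r ≤ 3) (hr'₁ : 1 ≤ r') (hr'₂ : r' ≤ 3)
    (hne : (j', r') ≠ (j, r)) :
    levee (slopeG m j' r') (pPoint m i j r).1 ((pPoint m i j r).2 - j' * DeltaG m) = 0 := by
  apply levee_eq_zero_of_two_le_abs
  set X := (pPoint m i j r).1
  obtain ⟨hs₁, hs₂⟩ := slopeG_mem_Icc hj₁ hj₂ hr₁ hr₂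
  have hm : (0 : ℝ) < 2 * m := by
    have : (1 : ℝ) ≤ m := by exact_mod_cast hj₁.trans hj₂
    linarith
  have hX : X * (1 - slopeG m j r) = DeltaG m * (i + j) :=
    pPoint_fst_mul_one_sub_slopeG (by linarith)
  have hXδ : 2 ≤ X / (2 * m) := by
    have hXD : DeltaG m * (i + j) / 2 ≤ X := le_pPoint_fst hs₁ (by linarith)
    have hij : (1 : ℝ) ≤ i + j := by
      have : (1 : ℝ) ≤ j := by exact_mod_cast hj₁
      linarith [(i.cast_nonneg : (0 : ℝ) ≤ i)]
    rw [le_div_iff₀ hm]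
    unfold DeltaG at hXD
    nlinarith
  have hoffset : (pPoint m i j r).2 - j' * DeltaG m - slopeG m j' r' * X
      = DeltaG m * (((j : ℤ) - j' : ℤ) : ℝ)
        + X / (2 * m) * (2 * (((j : ℤ) - j' : ℤ) : ℝ) + (((r : ℤ) - r' : ℤ) : ℝ)) := by
    have hsnd : (pPoint m i j r).2 = X - DeltaG m * i := rfl
    rw [hsnd]
    push_cast
    linear_combination hX + X * slopeG_sub_slopeG m j r j' r'
  rw [hoffset]
  refine two_le_abs_mul_add_mul_of_ne_zero (two_le_DeltaG m) hXδ
    (abs_le.mpr ⟨by omega, by omega⟩) ?_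
  by_contra! h
  exact hne (Prod.ext (by omega) (by omega))

lemma levee_one_pPoint_of_ne {i' : ℕ} (hi : i' ≠ i) :
    levee 1 (pPoint m i j r).1 ((pPoint m i j r).2 + i' * DeltaG m) = 0 := by
  apply levee_eq_zero_of_two_le_abs
  have hoffset : (pPoint m i j r).2 + i' * DeltaG m - 1 * (pPoint m i j r).1
      = DeltaG m * (((i' : ℤ) - i : ℤ) : ℝ) := by
    simp only [pPoint]
    push_cast
    ring
  have hii : (1 : ℝ) ≤ |(((i' : ℤ) - i : ℤ) : ℝ)| := by
    have hi' : (i' : ℤ) ≠ i := by exact_mod_cast hi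
    exact_mod_cast Int.one_le_abs (sub_ne_zero.mpr hi')
  rw [hoffset, abs_mul, abs_of_nonneg (by linarith [two_le_DeltaG m])]
  nlinarith [two_le_DeltaG m]

lemma levee_neg_one_pPoint {i' : ℕ} (hs₁ : -1 ≤ slopeG m j r) (hs₂ : slopeG m j r < 1)
    (hi' : 1 ≤ i') :
    levee (-1) (pPoint m i j r).1 ((pPoint m i j r).2 + i' * DeltaG m) = 0 := by
  apply levee_eq_zero_of_two_le_abs
  have hX : DeltaG m * (i + j) / 2 ≤ (pPoint m i j r).1 := le_pPoint_fst hs₁ hs₂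
  have hi'R : (1 : ℝ) ≤ i' := by exact_mod_cast hi'
  have hD := two_le_DeltaG m
  have hoffset : (pPoint m i j r).2 + i' * DeltaG m - -1 * (pPoint m i j r).1
      = 2 * (pPoint m i j r).1 + DeltaG m * (i' - i) := by
    simp only [pPoint]
    ring
  rw [hoffset, le_abs]
  left
  nlinarith [(j.cast_nonneg : (0 : ℝ) ≤ j)]

end pPoint

theorem exactly_two_levees_nonzero_at_p_general (m n : ℕ)
    (v : ℕ → ℕ → ℕ)
    (j r : ℕ) (hj₁ : 1 ≤ j) (hj₂ : j ≤ m) (hr₁ : 1 ≤ r) (hr₂ : r ≤ 3) :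
    levee (slopeG m j r) (pPoint m (v j r) j r).1
        ((pPoint m (v j r) j r).2 - (j : ℝ) * DeltaG m) = 1 ∧
    levee 1 (pPoint m (v j r) j r).1
        ((pPoint m (v j r) j r).2 + (v j r : ℝ) * DeltaG m) = 1 ∧
    (∀ j' r', 1 ≤ j' → j' ≤ m → 1 ≤ r' → r' ≤ 3 → (j', r') ≠ (j, r) →
      levee (slopeG m j' r') (pPoint m (v j r) j r).1
        ((pPoint m (v j r) j r).2 - (j' : ℝ) * DeltaG m) = 0) ∧
    (∀ (i' : ℕ) (σ : ℝ), 1 ≤ i' → i' ≤ n → (σ = -1 ∨ σ = 1) →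
      (i', σ) ≠ (v j r, (1 : ℝ)) →
      levee σ (pPoint m (v j r) j r).1
        ((pPoint m (v j r) j r).2 + (i' : ℝ) * DeltaG m) = 0) := by
  obtain ⟨hs₁, hs₂⟩ := slopeG_mem_Icc hj₁ hj₂ hr₁ hr₂
  refine ⟨levee_slopeG_pPoint_self (by linarith), levee_one_pPoint_self,
    fun _ _ _ _ hr'₁ hr'₂ hne => levee_slopeG_pPoint_of_ne hj₁ hj₂ hr₁ hr₂ hr'₁ hr'₂ hne, ?_⟩
  rintro i' σ hi'₁ - (rfl | rfl) hne
  · exact levee_neg_one_pPoint hs₁ (by linarith) hi'₁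
  · exact levee_one_pPoint_of_ne fun h => hne (by rw [h])

/-- Among the `3m + 2n` levees of the global construction, exactly the two levees
`L_{j,r}` and `M_{v(j,r),1}` are nonzero at `p_{j,r}`, and both attain the value `1` there. -/
theorem exactly_two_levees_nonzero_at_p (m n : ℕ) (hm : 1 ≤ m) (hn : 1 ≤ n)
    (v : ℕ → ℕ → ℕ)
    (hv : ∀ j, 1 ≤ j → j ≤ m → ∀ r, 1 ≤ r → r ≤ 3 → 1 ≤ v j r ∧ v j r ≤ n)
    (hvdist : ∀ j, 1 ≤ j → j ≤ m → ∀ r r', 1 ≤ r → r ≤ 3 → 1 ≤ r' → r' ≤ 3 → r ≠ r' →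
      v j r ≠ v j r')
    (j r : ℕ) (hj₁ : 1 ≤ j) (hj₂ : j ≤ m) (hr₁ : 1 ≤ r) (hr₂ : r ≤ 3) :
    levee (slopeG m j r) (pPoint m (v j r) j r).1
        ((pPoint m (v j r) j r).2 - (j : ℝ) * DeltaG m) = 1 ∧
    levee 1 (pPoint m (v j r) j r).1
        ((pPoint m (v j r) j r).2 + (v j r : ℝ) * DeltaG m) = 1 ∧
    (∀ j' r', 1 ≤ j' → j' ≤ m → 1 ≤ r' → r' ≤ 3 → (j', r') ≠ (j, r) →
      levee (slopeG m j' r') (pPoint m (v j r) j r).1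
        ((pPoint m (v j r) j r).2 - (j' : ℝ) * DeltaG m) = 0) ∧
    (∀ (i' : ℕ) (σ : ℝ), 1 ≤ i' → i' ≤ n → (σ = -1 ∨ σ = 1) →
      (i', σ) ≠ (v j r, (1 : ℝ)) →
      levee σ (pPoint m (v j r) j r).1
        ((pPoint m (v j r) j r).2 + (i' : ℝ) * DeltaG m) = 0) :=
  exactly_two_levees_nonzero_at_p_general m n v j r hj₁ hj₂ hr₁ hr₂
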